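/- Let A = ⊕_{n∈ℕ} A_n be a graded algebra over a commutative ring, and let φ : T_{A_0}(A_1) → A be the unique algebra homomorphism with φ ∘ i_0 = i_0^A and φ ∘ i_1 = i_1^A, where T_{A_0}(A_1) is the tensor algebra of the A_0-bimodule A_1. Then the following are equivalent: (a) A is strongly ℕ-graded; (a') m_{a,1} : A_a ⊗ A_1 → A_{a+1} is surjective for every a; (b) every component φ_n is surjective; (c) φ is surjective; (d) A[n] = A[1]^n for every n, where A[1] is the two-sided ideal ⊕_{i≥1} A_i and A[1]^n its n-th power; (e) A[2] = A[1]^2. -/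

import Mathlib

open TensorProduct DirectSum

universe u

variable (R : Type*) [CommRing R]

/-- Transport along an equality of indices. -/
def lcast (T : ℕ → Type u) [∀ n, AddCommGroup (T n)] [∀ n, Module R (T n)]
    {m n : ℕ} (h : m = n) : T m ≃ₗ[R] T n := by
  subst h; exact LinearEquiv.refl R (T m)

/-- A grading whose degree-`0` and degree-`1` components are those of `A` and whose higher
components are given by `D`; used to realize the relative tensor algebra `T_{A_0}(A_1)`. -/
def famT (A D : ℕ → Type u) : ℕ → Type u
  | 0 => A 0
  | 1 => A 1
  | n + 2 => D n

instance famTAddCommGroup (A D : ℕ → Type u) [∀ n, AddCommGroup (A n)]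
    [∀ n, AddCommGroup (D n)] : ∀ n, AddCommGroup (famT A D n)
  | 0 => inferInstanceAs (AddCommGroup (A 0))
  | 1 => inferInstanceAs (AddCommGroup (A 1))
  | n + 2 => inferInstanceAs (AddCommGroup (D n))

instance famTModule (A D : ℕ → Type u) [∀ n, AddCommGroup (A n)] [∀ n, AddCommGroup (D n)]
    [∀ n, Module R (A n)] [∀ n, Module R (D n)] : ∀ n, Module R (famT A D n)
  | 0 => inferInstanceAs (Module R (A 0))
  | 1 => inferInstanceAs (Module R (A 1))
  | n + 2 => inferInstanceAs (Module R (D n))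

variable (A : ℕ → Type u) [∀ n, AddCommGroup (A n)] [∀ n, Module R (A n)]

/-- The tail `A[m] = ⊕_{i≥m} A_i` as a submodule of `A`. -/
noncomputable def tailSub (m : ℕ) : Submodule R (⨁ n, A n) :=
  ⨆ i : {i : ℕ // m ≤ i}, LinearMap.range (DirectSum.lof R ℕ A i.1)

/-- The product of two submodules with respect to a multiplication `mul`. -/
noncomputable def mulSub (mul : (⨁ n, A n) ⊗[R] (⨁ n, A n) →ₗ[R] ⨁ n, A n)
    (P Q : Submodule R (⨁ n, A n)) : Submodule R (⨁ n, A n) :=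
  Submodule.span R {z | ∃ x ∈ P, ∃ y ∈ Q, z = mul (x ⊗ₜ[R] y)}

/-- The powers `A[1]^n` of the two-sided ideal `A[1] = ⊕_{i≥1} A_i`, with `A[1]^0 = A`. -/
noncomputable def idealPow (mul : (⨁ n, A n) ⊗[R] (⨁ n, A n) →ₗ[R] ⨁ n, A n) :
    ℕ → Submodule R (⨁ n, A n)
  | 0 => ⊤
  | 1 => tailSub R A 1
  | n + 2 => mulSub R A mul (tailSub R A 1) (idealPow mul (n + 1))

section Helpers

variable (T : ℕ → Type u) [∀ n, AddCommGroup (T n)] [∀ n, Module R (T n)]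

lemma lcast_lcast {a b c : ℕ} (h1 : a = b) (h2 : b = c) (x : T a) :
    lcast R T h2 (lcast R T h1 x) = lcast R T (h1.trans h2) x := by
  subst h1; subst h2; rfl

lemma lcast_refl {a : ℕ} (h : a = a) (x : T a) : lcast R T h x = x := rfl

lemma lof_lcast {a b : ℕ} (h : a = b) (x : T a) :
    DirectSum.lof R ℕ T b (lcast R T h x) = DirectSum.lof R ℕ T a x := by
  subst h; rfl

lemma component_lof_ne {a b : ℕ} (h : a ≠ b) (x : T a) :
    DirectSum.component R ℕ T b (DirectSum.lof R ℕ T a x) = 0 := by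
  classical
  rw [DirectSum.component.of]
  simp [h]

lemma lof_inj (n : ℕ) : Function.Injective (DirectSum.lof R ℕ T n) := fun x y h => by
  have := congrArg (DirectSum.component R ℕ T n) h
  simpa using this

end Helpers

/-- Let `A = ⊕ A_n` be a graded algebra over a commutative ring and
`φ : T_{A_0}(A_1) → A` the unique algebra homomorphism with `φ ∘ i_0 = i_0` and `φ ∘ i_1 = i_1`,
where `T_{A_0}(A_1)` is the relative tensor algebra of the `A_0`-bimodule `A_1` (encoded as a
graded algebra `T` with `T_0 = A_0`, `T_1 = A_1`, whose components `m_{1,n}` are the canonical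
coequalizer maps). Then (a), (a'), (b), (c), (d), (e) are equivalent. -/
theorem stmt17 (D : ℕ → Type u) [∀ n, AddCommGroup (D n)] [∀ n, Module R (D n)]
    -- the graded algebra `A`:
    (mulA : (⨁ n, A n) ⊗[R] (⨁ n, A n) →ₗ[R] ⨁ n, A n)
    (mabA : ∀ a b : ℕ, A a ⊗[R] A b →ₗ[R] A (a + b)) (u0 : R →ₗ[R] A 0)
    (hassocA : mulA ∘ₗ mulA.rTensor (⨁ n, A n) =
      mulA ∘ₗ mulA.lTensor (⨁ n, A n) ∘ₗ
        (TensorProduct.assoc R (⨁ n, A n) (⨁ n, A n) (⨁ n, A n)).toLinearMap)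
    (hunitAl : mulA ∘ₗ (DirectSum.lof R ℕ A 0 ∘ₗ u0).rTensor (⨁ n, A n) =
      (TensorProduct.lid R (⨁ n, A n)).toLinearMap)
    (hunitAr : mulA ∘ₗ (DirectSum.lof R ℕ A 0 ∘ₗ u0).lTensor (⨁ n, A n) =
      (TensorProduct.rid R (⨁ n, A n)).toLinearMap)
    (hgrA : ∀ a b : ℕ,
      mulA ∘ₗ TensorProduct.map (DirectSum.lof R ℕ A a) (DirectSum.lof R ℕ A b) =
        DirectSum.lof R ℕ A (a + b) ∘ₗ mabA a b)
    -- the relative tensor algebra `T = T_{A_0}(A_1)`: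
    (mabT : ∀ u v : ℕ, famT A D u ⊗[R] famT A D v →ₗ[R] famT A D (u + v))
    (hT00 : mabT 0 0 = mabA 0 0) (hT01 : mabT 0 1 = mabA 0 1) (hT10 : mabT 1 0 = mabA 1 0)
    (hassocT : ∀ a b c : ℕ,
      mabT (a + b) c ∘ₗ (mabT a b).rTensor (famT A D c) =
        (lcast R (famT A D) (Nat.add_assoc a b c).symm).toLinearMap ∘ₗ mabT a (b + c) ∘ₗ
          (mabT b c).lTensor (famT A D a) ∘ₗ
            (TensorProduct.assoc R (famT A D a) (famT A D b) (famT A D c)).toLinearMap)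
    (hunitTr : ∀ d : ℕ, mabT d 0 ∘ₗ u0.lTensor (famT A D d) =
      (TensorProduct.rid R (famT A D d)).toLinearMap)
    (hunitTl : ∀ d : ℕ, mabT 0 d ∘ₗ u0.rTensor (famT A D d) =
      (lcast R (famT A D) (Nat.zero_add d).symm).toLinearMap ∘ₗ
        (TensorProduct.lid R (famT A D d)).toLinearMap)
    (hcoeq : ∀ n : ℕ,
      Function.Surjective (mabT 1 n) ∧
      LinearMap.ker (mabT 1 n) =
        LinearMap.range
          ((mabT 1 0).rTensor (famT A D n) -
            ((lcast R (famT A D) (Nat.zero_add n)).toLinearMap ∘ₗ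
                mabT 0 n).lTensor (famT A D 1) ∘ₗ
              (TensorProduct.assoc R (famT A D 1) (famT A D 0) (famT A D n)).toLinearMap))
    -- the multiplication of `⊕ T_n` and the canonical algebra homomorphism `φ`:
    (mulT : (⨁ n, famT A D n) ⊗[R] (⨁ n, famT A D n) →ₗ[R] ⨁ n, famT A D n)
    (hgrT : ∀ a b : ℕ,
      mulT ∘ₗ TensorProduct.map (DirectSum.lof R ℕ (famT A D) a)
          (DirectSum.lof R ℕ (famT A D) b) =
        DirectSum.lof R ℕ (famT A D) (a + b) ∘ₗ mabT a b)
    (φ : (⨁ n, famT A D n) →ₗ[R] ⨁ n, A n) (φn : ∀ n, famT A D n →ₗ[R] A n)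
    (hφalg : φ ∘ₗ mulT = mulA ∘ₗ TensorProduct.map φ φ)
    (hφgr : ∀ n : ℕ, φ ∘ₗ DirectSum.lof R ℕ (famT A D) n = DirectSum.lof R ℕ A n ∘ₗ φn n)
    (hφ0 : φ ∘ₗ DirectSum.lof R ℕ (famT A D) 0 = DirectSum.lof R ℕ A 0)
    (hφ1 : φ ∘ₗ DirectSum.lof R ℕ (famT A D) 1 = DirectSum.lof R ℕ A 1) :
    [ -- (a) `A` is a strongly ℕ-graded algebra
      (∀ a b : ℕ, Function.Surjective (mabA a b)),
      -- (a')
      (∀ a : ℕ, Function.Surjective (mabA a 1)),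
      -- (b)
      (∀ n : ℕ, Function.Surjective (φn n)),
      -- (c)
      Function.Surjective φ,
      -- (d)
      (∀ n : ℕ, tailSub R A n = idealPow R A mulA n),
      -- (e)
      tailSub R A 2 = idealPow R A mulA 2 ].TFAE := by
  classical
  set lA := DirectSum.lof R ℕ A with hlA
  set lT := DirectSum.lof R ℕ (famT A D) with hlT
  -- pointwise grading of mulA
  have hgr' : ∀ (a b : ℕ) (t : A a ⊗[R] A b),
      mulA (TensorProduct.map (lA a) (lA b) t) = lA (a + b) (mabA a b t) := by
    intro a b t
    exact LinearMap.congr_fun (hgrA a b) t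
  have hgr'' : ∀ (a b : ℕ) (x : A a) (y : A b),
      mulA (lA a x ⊗ₜ[R] lA b y) = lA (a + b) (mabA a b (x ⊗ₜ[R] y)) := by
    intro a b x y
    simpa using hgr' a b (x ⊗ₜ y)
  have linj : ∀ n : ℕ, Function.Injective (lA n) := fun n => lof_inj R A n
  -- unit facts
  have unitR : ∀ (a : ℕ) (x : A a), mabA a 0 (x ⊗ₜ[R] u0 1) = x := by
    intro a x
    apply linj a
    have h := LinearMap.congr_fun hunitAr (lA a x ⊗ₜ[R] (1 : R))
    simp only [LinearMap.coe_comp, Function.comp_apply, LinearMap.lTensor_tmul,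
      LinearEquiv.coe_coe, TensorProduct.rid_tmul, one_smul] at h
    rw [hgr''] at h
    exact h
  have unitL : ∀ (b : ℕ) (x : A b),
      mabA 0 b (u0 1 ⊗ₜ[R] x) = lcast R A (Nat.zero_add b).symm x := by
    intro b x
    apply linj (0 + b)
    have h := LinearMap.congr_fun hunitAl ((1 : R) ⊗ₜ[R] lA b x)
    simp only [LinearMap.coe_comp, Function.comp_apply, LinearMap.rTensor_tmul,
      LinearEquiv.coe_coe, TensorProduct.lid_tmul, one_smul] at h
    rw [hgr''] at h
    rw [lof_lcast, h]
  have surjA_a0 : ∀ a : ℕ, Function.Surjective (mabA a 0) := by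
    intro a x
    exact ⟨x ⊗ₜ u0 1, unitR a x⟩
  have surjA_0b : ∀ b : ℕ, Function.Surjective (mabA 0 b) := by
    intro b w
    refine ⟨u0 1 ⊗ₜ lcast R A (Nat.zero_add b) w, ?_⟩
    rw [unitL, lcast_lcast, lcast_refl]
  -- componentwise associativity of mabA
  have hassocA' : ∀ (a b c : ℕ) (x : A a) (y : A b) (z : A c),
      mabA (a + b) c (mabA a b (x ⊗ₜ[R] y) ⊗ₜ[R] z) =
        lcast R A (Nat.add_assoc a b c).symm
          (mabA a (b + c) (x ⊗ₜ[R] mabA b c (y ⊗ₜ[R] z))) := by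
    intro a b c x y z
    apply linj (a + b + c)
    have h := LinearMap.congr_fun hassocA ((lA a x ⊗ₜ[R] lA b y) ⊗ₜ[R] lA c z)
    simp only [LinearMap.coe_comp, Function.comp_apply, LinearMap.rTensor_tmul,
      LinearEquiv.coe_coe, TensorProduct.assoc_tmul, LinearMap.lTensor_tmul,
      hgr''] at h
    rw [lof_lcast]
    exact h
  have hAcomp : ∀ a b c : ℕ,
      mabA (a + b) c ∘ₗ (mabA a b).rTensor (A c) =
        (lcast R A (Nat.add_assoc a b c).symm).toLinearMap ∘ₗ mabA a (b + c) ∘ₗ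
          (mabA b c).lTensor (A a) ∘ₗ
            (TensorProduct.assoc R (A a) (A b) (A c)).toLinearMap := by
    intro a b c
    apply TensorProduct.ext_threefold
    intro x y z
    simpa using hassocA' a b c x y z
  -- phi facts
  have φ0 : ∀ x, φn 0 x = x := by
    intro x
    apply linj 0
    have h1 := LinearMap.congr_fun (hφgr 0) x
    have h2 := LinearMap.congr_fun hφ0 x
    exact h1.symm.trans h2
  have φ1 : ∀ x, φn 1 x = x := by
    intro x
    apply linj 1
    have h1 := LinearMap.congr_fun (hφgr 1) x
    have h2 := LinearMap.congr_fun hφ1 x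
    exact h1.symm.trans h2
  have φmul : ∀ (a b : ℕ) (t : famT A D a ⊗[R] famT A D b),
      φn (a + b) (mabT a b t) = mabA a b (TensorProduct.map (φn a) (φn b) t) := by
    intro a b t
    apply linj (a + b)
    have h1 := LinearMap.congr_fun (hφgr (a + b)) (mabT a b t)
    have h2 := LinearMap.congr_fun (hgrT a b) t
    have h3 := LinearMap.congr_fun hφalg (TensorProduct.map (lT a) (lT b) t)
    have h4 : TensorProduct.map φ φ ∘ₗ TensorProduct.map (lT a) (lT b) =
        TensorProduct.map (lA a) (lA b) ∘ₗ TensorProduct.map (φn a) (φn b) := by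
      rw [← TensorProduct.map_comp, ← TensorProduct.map_comp, hφgr a, hφgr b]
    have h4' := LinearMap.congr_fun h4 t
    simp only [LinearMap.coe_comp, Function.comp_apply] at h1 h2 h3 h4'
    rw [← h1, ← h2, h3, h4', hgr']
  -- surjectivity on the tensor algebra side
  have Tcast : ∀ {m n : ℕ}, m = n → ∀ b : ℕ,
      Function.Surjective (mabT m b) → Function.Surjective (mabT n b) := by
    intro m n e
    subst e
    exact fun _ h => h
  have surjT : ∀ a b : ℕ, Function.Surjective (mabT a b) := by
    intro a
    induction a with
    | zero =>
      intro b w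
      refine ⟨u0 1 ⊗ₜ lcast R (famT A D) (Nat.zero_add b) w, ?_⟩
      have h := LinearMap.congr_fun (hunitTl b)
        ((1 : R) ⊗ₜ[R] lcast R (famT A D) (Nat.zero_add b) w)
      erw [LinearMap.comp_apply, LinearMap.comp_apply] at h
      erw [LinearMap.rTensor_tmul] at h
      erw [LinearMap.comp_apply, TensorProduct.lid_tmul, one_smul] at h
      erw [h]
      erw [lcast_lcast, lcast_refl]
    | succ a ih =>
      intro b
      refine Tcast (Nat.add_comm 1 a) b ?_
      have hs : Function.Surjective
          ((lcast R (famT A D) (Nat.add_assoc 1 a b).symm).toLinearMap ∘ₗ mabT 1 (a + b) ∘ₗ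
            (mabT a b).lTensor (famT A D 1) ∘ₗ
              (TensorProduct.assoc R (famT A D 1) (famT A D a) (famT A D b)).toLinearMap) := by
        simp only [LinearMap.coe_comp, LinearEquiv.coe_coe]
        exact ((lcast R (famT A D) (Nat.add_assoc 1 a b).symm).surjective).comp
          (((hcoeq (a + b)).1).comp
            ((LinearMap.lTensor_surjective _ (ih b)).comp
              (TensorProduct.assoc R (famT A D 1) (famT A D a) (famT A D b)).surjective))
      rw [← hassocT 1 a b] at hs
      rw [LinearMap.coe_comp] at hs
      exact hs.of_comp
  -- membership in tails
  have mem_tail : ∀ (m i : ℕ), m ≤ i → ∀ x : A i, lA i x ∈ tailSub R A m := by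
    intro m i h x
    exact (le_iSup (fun i : {i : ℕ // m ≤ i} => LinearMap.range (lA i.1)) ⟨i, h⟩) ⟨x, rfl⟩
  -- implications
  tfae_have 1 → 2 := fun h a => h a 1
  tfae_have 2 → 1 := by
    intro h a b
    induction b with
    | zero => exact surjA_a0 a
    | succ b ih =>
      have hsL : Function.Surjective (⇑(mabA (a + b) 1) ∘ ⇑((mabA a b).rTensor (A 1))) :=
        (h (a + b)).comp (LinearMap.rTensor_surjective _ ih)
      rw [← LinearMap.coe_comp, hAcomp a b 1] at hsL
      intro w
      obtain ⟨t, ht⟩ := hsL (lcast R A (Nat.add_assoc a b 1).symm w)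
      simp only [LinearMap.coe_comp, Function.comp_apply, LinearEquiv.coe_coe] at ht
      exact ⟨(mabA b 1).lTensor (A a) ((TensorProduct.assoc R (A a) (A b) (A 1)) t),
        (lcast R A (Nat.add_assoc a b 1).symm).injective ht⟩
  tfae_have 1 → 3 := by
    intro ha
    have φcast : ∀ {m n : ℕ}, m = n →
        Function.Surjective (φn m) → Function.Surjective (φn n) := by
      intro m n e
      subst e
      exact id
    intro n
    induction n with
    | zero => exact fun x => ⟨x, φ0 x⟩
    | succ n ih =>
      refine φcast (Nat.add_comm 1 n) ?_
      have hc : ⇑(φn (1 + n)) ∘ ⇑(mabT 1 n) =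
          ⇑(mabA 1 n) ∘ ⇑(TensorProduct.map (φn 1) (φn n)) := funext (φmul 1 n)
      have hs : Function.Surjective (⇑(φn (1 + n)) ∘ ⇑(mabT 1 n)) := by
        rw [hc]
        exact (ha 1 n).comp (TensorProduct.map_surjective (g := φn 1) (g' := φn n) (fun x => ⟨x, φ1 x⟩) ih)
      exact hs.of_comp
  tfae_have 3 → 4 := by
    intro hb w
    refine DirectSum.induction_on w ⟨0, map_zero φ⟩ (fun i x => ?_) ?_
    · obtain ⟨t, ht⟩ := hb i x
      refine ⟨lT i t, ?_⟩
      have h1 := LinearMap.congr_fun (hφgr i) t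
      simp only [LinearMap.coe_comp, Function.comp_apply] at h1
      rw [h1, ht, ← DirectSum.lof_eq_of R ℕ A i]
    · rintro x y ⟨tx, hx⟩ ⟨ty, hy⟩
      exact ⟨tx + ty, by rw [map_add, hx, hy]⟩
  tfae_have 4 → 3 := by
    intro hc n x
    obtain ⟨t, ht⟩ := hc (lA n x)
    have key : ∀ t, (DirectSum.component R ℕ A n) (φ t) ∈ LinearMap.range (φn n) := by
      intro t
      refine DirectSum.induction_on t (by simp) (fun i s => ?_) ?_
      · have h1 := LinearMap.congr_fun (hφgr i) s
        simp only [LinearMap.coe_comp, Function.comp_apply] at h1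
        rw [← DirectSum.lof_eq_of R ℕ (famT A D) i, h1]
        by_cases hin : i = n
        · subst hin
          rw [DirectSum.component.lof_self]
          exact ⟨s, rfl⟩
        · rw [component_lof_ne R A hin]
          exact zero_mem _
      · intro u v hu hv
        rw [map_add, map_add]
        exact add_mem hu hv
    have h2 := key t
    rwa [ht, DirectSum.component.lof_self] at h2
  tfae_have 3 → 1 := by
    intro hb a b
    have hcomp : ⇑(φn (a + b)) ∘ ⇑(mabT a b) =
        ⇑(mabA a b) ∘ ⇑(TensorProduct.map (φn a) (φn b)) := funext (φmul a b)
    have hs : Function.Surjective (⇑(φn (a + b)) ∘ ⇑(mabT a b)) :=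
      (hb (a + b)).comp (surjT a b)
    rw [hcomp] at hs
    exact hs.of_comp
  have tail0 : tailSub R A 0 = ⊤ := by
    refine le_antisymm le_top ?_
    intro x _
    refine DirectSum.induction_on x (zero_mem _) (fun i y => ?_) (fun a b ha hb => add_mem ha hb)
    rw [← DirectSum.lof_eq_of R ℕ A i]
    exact mem_tail 0 i (Nat.zero_le i) y
  tfae_have 1 → 5 := by
    intro ha
    have key : ∀ n : ℕ, tailSub R A (n + 2) =
        mulSub R A mulA (tailSub R A 1) (tailSub R A (n + 1)) := by
      intro n
      refine le_antisymm ?_ ?_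
      · refine iSup_le ?_
        rintro ⟨i, hi⟩ w hw
        obtain ⟨z, rfl⟩ := hw
        obtain ⟨k, rfl⟩ : ∃ k, i = 1 + k := ⟨i - 1, by omega⟩
        obtain ⟨t, ht⟩ := ha 1 k z
        rw [← ht, ← hgr' 1 k t]
        refine TensorProduct.induction_on t ?_ (fun x y => ?_) ?_
        · rw [map_zero, map_zero]
          exact zero_mem _
        · rw [TensorProduct.map_tmul]
          exact Submodule.subset_span
            ⟨lA 1 x, mem_tail 1 1 le_rfl x, lA k y, mem_tail (n + 1) k (by omega) y, rfl⟩
        · intro u v hu hv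
          rw [map_add, map_add]
          exact add_mem hu hv
      · refine Submodule.span_le.mpr ?_
        rintro w ⟨x, hx, y, hy, rfl⟩
        refine Submodule.iSup_induction _ (motive := fun x => ∀ y ∈ tailSub R A (n + 1),
          mulA (x ⊗ₜ[R] y) ∈ tailSub R A (n + 2)) hx ?_ ?_ ?_ y hy
        · rintro ⟨i, hi⟩ x' hx' y' hy'
          obtain ⟨z, rfl⟩ := hx'
          refine Submodule.iSup_induction _ (motive := fun y =>
            mulA (lA i z ⊗ₜ[R] y) ∈ tailSub R A (n + 2)) hy' ?_ ?_ ?_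
          · rintro ⟨j, hj⟩ w' hw'
            obtain ⟨v, rfl⟩ := hw'
            rw [hgr'']
            exact mem_tail (n + 2) (i + j) (by omega) _
          · simp only [TensorProduct.tmul_zero, map_zero]
            exact zero_mem _
          · intro u v hu hv
            simp only [TensorProduct.tmul_add, map_add]
            exact add_mem hu hv
        · intro y' hy'
          simp only [TensorProduct.zero_tmul, map_zero]
          exact zero_mem _
        · intro u v hu hv y' hy'
          simp only [TensorProduct.add_tmul, map_add]
          exact add_mem (hu y' hy') (hv y' hy')
    intro n
    induction n using Nat.strong_induction_on with
    | _ n ih =>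
      rcases n with _ | _ | m
      · rw [tail0]
        rfl
      · rfl
      · show tailSub R A (m + 2) = mulSub R A mulA (tailSub R A 1) (idealPow R A mulA (m + 1))
        rw [← ih (m + 1) (by omega), key m]
  tfae_have 5 → 6 := fun h => h 2
  tfae_have 6 → 2 := by
    intro he a
    induction a using Nat.strong_induction_on with
    | _ a iha =>
      rcases a with _ | a'
      · exact surjA_0b 1
      · have he2 : tailSub R A 2 = mulSub R A mulA (tailSub R A 1) (tailSub R A 1) := he
        have crange : ∀ {m k : ℕ}, m = k → ∀ (h2 : m + 1 = k + 1) (s : A m ⊗[R] A 1),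
            lcast R A h2 (mabA m 1 s) ∈ LinearMap.range (mabA k 1) := by
          intro m k e
          subst e
          intro h2 s
          exact ⟨s, (lcast_refl R A h2 _).symm⟩
        have G : ∀ w ∈ mulSub R A mulA (tailSub R A 1) (tailSub R A 1),
            DirectSum.component R ℕ A (a' + 2) w ∈ LinearMap.range (mabA (a' + 1) 1) := by
          intro w hw
          refine Submodule.span_induction ?_ ?_ ?_ ?_ hw
          · rintro w' ⟨x, hx, y, hy, rfl⟩
            refine Submodule.iSup_induction _ (motive := fun x => ∀ y ∈ tailSub R A 1,
              DirectSum.component R ℕ A (a' + 2) (mulA (x ⊗ₜ[R] y)) ∈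
                LinearMap.range (mabA (a' + 1) 1)) hx ?_ ?_ ?_ y hy
            · rintro ⟨i, hi⟩ x' hx' y' hy'
              obtain ⟨z, rfl⟩ := hx'
              refine Submodule.iSup_induction _ (motive := fun y =>
                DirectSum.component R ℕ A (a' + 2) (mulA (lA i z ⊗ₜ[R] y)) ∈
                  LinearMap.range (mabA (a' + 1) 1)) hy' ?_ ?_ ?_
              · rintro ⟨j, hj⟩ w'' hw''
                obtain ⟨v, rfl⟩ := hw''
                rw [hgr'']
                by_cases hij : i + j = a' + 2
                · rw [← lof_lcast R A hij, DirectSum.component.lof_self]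
                  obtain ⟨j', rfl⟩ : ∃ j', j = j' + 1 := ⟨j - 1, by omega⟩
                  have hj'surj : Function.Surjective (mabA j' 1) := iha j' (by omega)
                  obtain ⟨s, hs⟩ := LinearMap.lTensor_surjective (A i) hj'surj (z ⊗ₜ[R] v)
                  have hcc := LinearMap.congr_fun (hAcomp i j' 1)
                    ((TensorProduct.assoc R (A i) (A j') (A 1)).symm s)
                  simp only [LinearMap.coe_comp, Function.comp_apply, LinearEquiv.coe_coe,
                    LinearEquiv.apply_symm_apply] at hcc
                  rw [hs] at hcc
                  have hkey : mabA i (j' + 1) (z ⊗ₜ[R] v) =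
                      lcast R A (Nat.add_assoc i j' 1) (mabA (i + j') 1
                        ((mabA i j').rTensor (A 1)
                          ((TensorProduct.assoc R (A i) (A j') (A 1)).symm s))) := by
                    rw [hcc, lcast_lcast, lcast_refl]
                  rw [hkey, lcast_lcast]
                  exact crange (by omega : i + j' = a' + 1) _ _
                · rw [component_lof_ne R A hij]
                  exact zero_mem _
              · simp only [TensorProduct.tmul_zero, map_zero]
                exact zero_mem _
              · intro u v hu hv
                simp only [TensorProduct.tmul_add, map_add]
                exact add_mem hu hv
            · intro y' hy'
              simp only [TensorProduct.zero_tmul, map_zero]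
              exact zero_mem _
            · intro u v hu hv y' hy'
              simp only [TensorProduct.add_tmul, map_add]
              exact add_mem (hu y' hy') (hv y' hy')
          · rw [map_zero]
            exact zero_mem _
          · intro x y _ _ hx hy
            rw [map_add]
            exact add_mem hx hy
          · intro r x _ hx
            rw [map_smul]
            exact Submodule.smul_mem _ r hx
        intro z
        have hz : lA (a' + 2) z ∈ tailSub R A 2 := mem_tail 2 (a' + 2) (by omega) z
        rw [he2] at hz
        have hfin := G _ hz
        rwa [DirectSum.component.lof_self] at hfin
  tfae_finish
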